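/- The subTuring jump K is uniformly monotone: there is a computable function b such that if f ≤subT g via index d (i.e. f ⊆ Φ_d[g]), then K(f) ≤subT K(g) via the index λe. b(d,e); concretely K(f)(e) = K(g)(b(d,e)) for all e ∈ dom(K(f)). -/

import Mathlib

open Classical

noncomputable section

/-- `as` is a valid answer history for the sequential oracle computation of `Φ`
with oracle `g` on input `n`: at each round `k`, the machine outputs a query
`(false, q)` with `q` in the domain of `g`, answered by `g q = as[k]`. -/
def ValidHist (Φ : List ℕ →. Bool × ℕ) (g : ℕ →. ℕ) (n : ℕ) (as : List ℕ) : Prop :=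
  ∀ (k : ℕ) (hk : k < as.length), ∃ q : ℕ,
    (false, q) ∈ Φ (n :: as.take k) ∧ (as[k]'hk) ∈ g q

/-- The sequential oracle computation `Φ[g](n)` halts with output `m`. -/
def HaltsTo (Φ : List ℕ →. Bool × ℕ) (g : ℕ →. ℕ) (n m : ℕ) : Prop :=
  ∃ as : List ℕ, ValidHist Φ g n as ∧ (true, m) ∈ Φ (n :: as)

/-- subTuring reducibility: `f ⊆ Φ[g]` for some partial computable `Φ`. -/
def SubTuringLE (f g : ℕ →. ℕ) : Prop :=
  ∃ Φ : List ℕ →. Bool × ℕ, Partrec Φ ∧ ∀ n m, m ∈ f n → HaltsTo Φ g n m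

/-- subTuring equivalence. -/
def SubTuringEquiv (f g : ℕ →. ℕ) : Prop := SubTuringLE f g ∧ SubTuringLE g f

/-- The `e`-th partial computable function `List ℕ →. Bool × ℕ`,
obtained from the `e`-th partial recursive code. -/
def phi (e : ℕ) : List ℕ →. Bool × ℕ := fun l =>
  ((Denumerable.ofNat Nat.Partrec.Code e).eval (Encodable.encode l)).bind fun k =>
    Part.ofOption (Encodable.decode (α := Bool × ℕ) k)

/-- The computation `Φ[g](n)` gets stuck: it makes a query outside `dom g`. -/
def Stuck (Φ : List ℕ →. Bool × ℕ) (g : ℕ →. ℕ) (n : ℕ) : Prop :=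
  ∃ as q, ValidHist Φ g n as ∧ (false, q) ∈ Φ (n :: as) ∧ q ∉ g.Dom

/-- The subTuring jump: `K f e = 1` if `Φ_e[f](e)` halts, `0` if it diverges
making only queries inside `dom f`, and undefined if it makes a query outside `dom f`. -/
def KJump (f : ℕ →. ℕ) : ℕ →. ℕ := fun e =>
  ⟨¬ Stuck (phi e) f e, fun _ => if (∃ m, HaltsTo (phi e) f e m) then 1 else 0⟩

/-!
Suppose `f ⊆ Φ_d[g]`. The machine `b d e` runs `Φ_e[f](e)` and answers each of its queries `q`
by running `Φ_d[g](q)`, taking the `g`-answers from its own answer history. If `Φ_e[f](e)`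
only asks queries in `dom f`, every such subcomputation halts with the value of `f` and is
therefore never stuck, so the simulation is never stuck either and halts exactly when
`Φ_e[f](e)` does: `K(f)(e) = K(g)(b d e)`. The index `b d e` is computable in `(d, e)` by the
s-m-n theorem, and `K(f) ≤subT K(g)` via the machine that asks the single query `b d e`.
-/

theorem PFun.fix_semiconj {α α' β : Type*} {F : α →. β ⊕ α} {F' : α' →. β ⊕ α'} (π : α → α')
    (hπ : ∀ a, F' (π a) = (F a).map (Sum.map id π)) (a : α) : F'.fix (π a) = F.fix a := by
  ext b
  constructor
  · intro h
    suffices ∀ a', b ∈ F'.fix a' → ∀ a, π a = a' → b ∈ F.fix a from this _ h a rfl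
    intro a' h'
    refine PFun.fixInduction h' fun a' h' ih a ha => ?_
    subst ha
    rcases PFun.mem_fix_iff.1 h' with hb | ⟨a'', ha'', -⟩
    · obtain ⟨s, hs, hsb⟩ := (Part.mem_map_iff _).1 (hπ a ▸ hb)
      cases s <;> cases hsb
      exact PFun.fix_stop hs
    · obtain ⟨s, hs, hsa⟩ := (Part.mem_map_iff _).1 (hπ a ▸ ha'')
      cases s <;> cases hsa
      exact PFun.mem_fix_iff.2 (Or.inr ⟨_, hs, ih _ ha'' _ rfl⟩)
  · intro h
    refine PFun.fixInduction' h (fun a ha => PFun.fix_stop ?_) (fun a₀ a₁ _ ha₁ ih => ?_)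
    · rw [hπ]; exact Part.mem_map _ ha
    · exact PFun.mem_fix_iff.2 (Or.inr ⟨π a₁, hπ a₀ ▸ Part.mem_map (Sum.map id π) ha₁, ih⟩)

theorem Partrec₂.fix {α σ β : Type*} [Primcodable α] [Primcodable σ] [Primcodable β]
    {F : α → σ →. β ⊕ σ} (hF : Partrec₂ F) : Partrec₂ fun a => PFun.fix (F a) := by
  let G : α × σ →. β ⊕ (α × σ) := fun p => (F p.1 p.2).map (Sum.map id (p.1, ·))
  have hG : Partrec G := hF.map <|
    (Computable.sumCasesOn .snd (Computable.sumInl.comp .snd).to₂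
      (Computable.sumInr.comp ((Computable.fst.comp (Computable.fst.comp .fst)).pair .snd)).to₂).to₂
  exact (Partrec.fix hG).of_eq fun p => PFun.fix_semiconj (F := F p.1) (p.1, ·) (fun _ => rfl) p.2

section OracleComputation

variable {Φ : List ℕ →. Bool × ℕ} {g : ℕ →. ℕ} {n : ℕ}

theorem ValidHist.nil : ValidHist Φ g n [] := fun _ hk => absurd hk (Nat.not_lt_zero _)

theorem ValidHist.of_append {as bs : List ℕ} (h : ValidHist Φ g n (as ++ bs)) :
    ValidHist Φ g n as := fun k hk => by
  obtain ⟨q, hq, hg⟩ := h k (by simp; omega)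
  refine ⟨q, ?_, ?_⟩
  · rwa [List.take_append_of_le_length hk.le] at hq
  · rwa [List.getElem_append_left hk] at hg

theorem validHist_append_singleton_iff {as : List ℕ} {a : ℕ} :
    ValidHist Φ g n (as ++ [a]) ↔
      ValidHist Φ g n as ∧ ∃ q, (false, q) ∈ Φ (n :: as) ∧ a ∈ g q := by
  refine ⟨fun h => ⟨h.of_append, ?_⟩, fun ⟨h, q, hq, ha⟩ k hk => ?_⟩
  · simpa using h as.length (by simp)
  · rcases (Nat.lt_succ_iff.1 (by simpa using hk)).lt_or_eq with hk | rfl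
    · simpa [List.take_append_of_le_length hk.le, List.getElem_append_left hk] using h k hk
    · exact ⟨q, by simpa using hq, by simpa using ha⟩

theorem ValidHist.isPrefix_of_length_le {as as' : List ℕ} (h : ValidHist Φ g n as)
    (h' : ValidHist Φ g n as') (hle : as.length ≤ as'.length) : as <+: as' := by
  induction as using List.reverseRecOn with
  | nil => exact List.nil_prefix
  | append_singleton as a ih =>
    obtain ⟨h, q, hq, ha⟩ := validHist_append_singleton_iff.1 h
    obtain ⟨rest, rfl⟩ := ih h (by simp at hle; omega)
    obtain _ | ⟨a', rest⟩ := rest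
    · simp at hle
    have h'' : ValidHist Φ g n (as ++ [a'] ++ rest) := by simpa using h'
    obtain ⟨-, q', hq', ha'⟩ := validHist_append_singleton_iff.1 h''.of_append
    obtain rfl : q' = q := by simpa using Part.mem_unique hq' hq
    obtain rfl : a' = a := Part.mem_unique ha' ha
    exact ⟨rest, by simp⟩

theorem ValidHist.isPrefix_of_halts {as as' : List ℕ} {m : ℕ} (h : ValidHist Φ g n as)
    (h' : ValidHist Φ g n as') (hm : (true, m) ∈ Φ (n :: as')) : as <+: as' := by
  refine (le_or_gt as.length as'.length).elim (h.isPrefix_of_length_le h') fun hlt => ?_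
  obtain ⟨_ | ⟨a, rest⟩, rfl⟩ := h'.isPrefix_of_length_le h hlt.le
  · simp at hlt
  have : ValidHist Φ g n (as' ++ [a] ++ rest) := by simpa using h
  obtain ⟨-, q, hq, -⟩ := validHist_append_singleton_iff.1 this.of_append
  simpa using Part.mem_unique hm hq

theorem HaltsTo.unique {m m' : ℕ} (h : HaltsTo Φ g n m) (h' : HaltsTo Φ g n m') : m = m' := by
  obtain ⟨as, has, hm⟩ := h
  obtain ⟨as', has', hm'⟩ := h'
  have hpre := has.isPrefix_of_halts has' hm'
  obtain rfl :=
    hpre.eq_of_length (hpre.length_le.antisymm (has'.isPrefix_of_halts has hm).length_le)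
  simpa using Part.mem_unique hm hm'

theorem HaltsTo.not_stuck {m : ℕ} (h : HaltsTo Φ g n m) : ¬ Stuck Φ g n := by
  rintro ⟨as, q, has, hq, hqg⟩
  obtain ⟨as', has', hm⟩ := h
  obtain ⟨_ | ⟨a, rest⟩, rfl⟩ := has.isPrefix_of_halts has' hm
  · rw [List.append_nil] at hm
    simpa using Part.mem_unique hm hq
  have : ValidHist Φ g n (as ++ [a] ++ rest) := by simpa using has'
  obtain ⟨-, q', hq', ha⟩ := validHist_append_singleton_iff.1 this.of_append
  obtain rfl : q' = q := by simpa using Part.mem_unique hq' hq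
  exact hqg (Part.dom_iff_mem.2 ⟨a, ha⟩)

end OracleComputation

/-- A configuration `(bs, rem, inn)` of the simulation of `Φ[Θ[g]](x)`: `bs` are the answers
given so far to the outer machine `Φ`, `rem` the `g`-answers not yet consumed, and `inn` is
`some (q, cs)` while `Θ[g](q)` is being run for the outer query `q`, with `g`-answers `cs`. -/
abbrev SimCfg : Type := List ℕ × List ℕ × Option (ℕ × List ℕ)

def simMove : SimCfg → Bool × ℕ → (Bool × ℕ) ⊕ SimCfg
  | (_, _, none), (true, m) => .inl (true, m)
  | (bs, rem, none), (false, q) => .inr (bs, rem, some (q, []))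
  | (bs, rem, some _), (true, m) => .inr (bs ++ [m], rem, none)
  | (_, [], some _), (false, q') => .inl (false, q')
  | (bs, a :: rem, some (q, cs)), (false, _) => .inr (bs, rem, some (q, cs ++ [a]))

section Simulation

variable (Φ Θ : List ℕ →. Bool × ℕ) (x : ℕ)

def simTransition : SimCfg →. (Bool × ℕ) ⊕ SimCfg
  | (bs, rem, none) => (Φ (x :: bs)).map (simMove (bs, rem, none))
  | (bs, rem, some (q, cs)) => (Θ (q :: cs)).map (simMove (bs, rem, some (q, cs)))

/-- On answer history `l.tail` the machine replays the whole simulation, consuming `l.tail` as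
`g`-answers, and asks the next `g`-query once they run out. -/
def compMachine (l : List ℕ) : Part (Bool × ℕ) :=
  PFun.fix (simTransition Φ Θ x) ([], l.tail, none)

inductive SimStep : SimCfg → SimCfg → Prop
  | outer_query {bs rem q} : (false, q) ∈ Φ (x :: bs) →
      SimStep (bs, rem, none) (bs, rem, some (q, []))
  | inner_halt {bs rem q cs m} : (true, m) ∈ Θ (q :: cs) →
      SimStep (bs, rem, some (q, cs)) (bs ++ [m], rem, none)
  | inner_query {bs a rem q cs q'} : (false, q') ∈ Θ (q :: cs) →
      SimStep (bs, a :: rem, some (q, cs)) (bs, rem, some (q, cs ++ [a]))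

inductive SimOut : SimCfg → Bool × ℕ → Prop
  | halt {bs rem m} : (true, m) ∈ Φ (x :: bs) → SimOut (bs, rem, none) (true, m)
  | query {bs q cs q'} : (false, q') ∈ Θ (q :: cs) → SimOut (bs, [], some (q, cs)) (false, q')

abbrev SimReach : SimCfg → SimCfg → Prop := Relation.ReflTransGen (SimStep Φ Θ x)

variable {Φ Θ x}

theorem mem_simTransition_iff {c : SimCfg} {v : (Bool × ℕ) ⊕ SimCfg} :
    v ∈ simTransition Φ Θ x c ↔ Sum.elim (SimOut Φ Θ x c) (SimStep Φ Θ x c) v := by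
  constructor
  · intro h
    obtain ⟨bs, rem, _ | ⟨q, cs⟩⟩ := c <;>
      obtain ⟨⟨_ | _, n⟩, hr, rfl⟩ := (Part.mem_map_iff _).1 h
    · exact .outer_query hr
    · exact .halt hr
    · cases rem
      · exact .query hr
      · exact .inner_query hr
    · exact .inner_halt hr
  · intro h
    cases v <;> cases h <;> exact Part.mem_map (simMove _) ‹_›

theorem SimStep.append_rem {c c' : SimCfg} (h : SimStep Φ Θ x c c') (r : List ℕ) :
    SimStep Φ Θ x (c.1, c.2.1 ++ r, c.2.2) (c'.1, c'.2.1 ++ r, c'.2.2) := by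
  cases h <;> constructor <;> assumption

theorem SimReach.append_rem {bs rem bs' rem' : List ℕ} {inn inn' : Option (ℕ × List ℕ)}
    (h : SimReach Φ Θ x (bs, rem, inn) (bs', rem', inn')) (r : List ℕ) :
    SimReach Φ Θ x (bs, rem ++ r, inn) (bs', rem' ++ r, inn') :=
  h.lift (fun c => (c.1, c.2.1 ++ r, c.2.2)) fun _ _ hc => hc.append_rem r

theorem mem_fix_simTransition_iff {c₀ : SimCfg} {v : Bool × ℕ} :
    v ∈ PFun.fix (simTransition Φ Θ x) c₀ ↔ ∃ c, SimReach Φ Θ x c₀ c ∧ SimOut Φ Θ x c v := by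
  constructor
  · intro hv
    refine PFun.fixInduction' hv (fun c hc => ⟨c, .refl, mem_simTransition_iff.1 hc⟩) ?_
    rintro c₀ c₁ - hstep ⟨c, hc, hout⟩
    exact ⟨c, .head (mem_simTransition_iff.1 hstep) hc, hout⟩
  · rintro ⟨c, hc, hout⟩
    induction hc using Relation.ReflTransGen.head_induction_on with
    | refl => exact PFun.fix_stop (mem_simTransition_iff.2 hout)
    | head hstep _ ih =>
      exact PFun.mem_fix_iff.2 (Or.inr ⟨_, mem_simTransition_iff.2 hstep, ih⟩)

theorem mem_compMachine_iff {y : ℕ} {as : List ℕ} {v : Bool × ℕ} :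
    v ∈ compMachine Φ Θ x (y :: as) ↔
      ∃ c, SimReach Φ Θ x ([], as, none) c ∧ SimOut Φ Θ x c v :=
  mem_fix_simTransition_iff

variable {f g : ℕ →. ℕ}

theorem simReach_run_inner {y : ℕ} {as bs cs : List ℕ} {q : ℕ}
    (has : ValidHist (compMachine Φ Θ x) g y as)
    (hr : SimReach Φ Θ x ([], as, none) (bs, [], some (q, [])))
    (hcs : ValidHist Θ g q cs) :
    ValidHist (compMachine Φ Θ x) g y (as ++ cs) ∧
      SimReach Φ Θ x ([], as ++ cs, none) (bs, [], some (q, cs)) := by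
  induction cs using List.reverseRecOn with
  | nil => simpa using ⟨has, hr⟩
  | append_singleton cs a ih =>
    obtain ⟨hcs, q', hq', ha⟩ := validHist_append_singleton_iff.1 hcs
    obtain ⟨has', hr'⟩ := ih hcs
    have hout : (false, q') ∈ compMachine Φ Θ x (y :: (as ++ cs)) :=
      mem_compMachine_iff.2 ⟨_, hr', .query hq'⟩
    rw [← List.append_assoc]
    exact ⟨validHist_append_singleton_iff.2 ⟨has', q', hout, ha⟩,
      (hr'.append_rem [a]).tail (.inner_query hq')⟩

theorem exists_validHist_simReach (hfg : ∀ n m, m ∈ f n → HaltsTo Θ g n m) (y : ℕ)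
    {bs : List ℕ} (hbs : ValidHist Φ f x bs) :
    ∃ as, ValidHist (compMachine Φ Θ x) g y as ∧
      SimReach Φ Θ x ([], as, none) (bs, [], none) := by
  induction bs using List.reverseRecOn with
  | nil => exact ⟨[], .nil, .refl⟩
  | append_singleton bs m ih =>
    obtain ⟨hbs, q, hq, hm⟩ := validHist_append_singleton_iff.1 hbs
    obtain ⟨as, has, hr⟩ := ih hbs
    obtain ⟨cs, hcs, hhalt⟩ := hfg q m hm
    obtain ⟨has', hr'⟩ := simReach_run_inner has (hr.tail (.outer_query hq)) hcs
    exact ⟨as ++ cs, has', hr'.tail (.inner_halt hhalt)⟩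

theorem HaltsTo.compMachine (hfg : ∀ n m, m ∈ f n → HaltsTo Θ g n m) {m : ℕ}
    (h : HaltsTo Φ f x m) (y : ℕ) : HaltsTo (compMachine Φ Θ x) g y m := by
  obtain ⟨bs, hbs, hm⟩ := h
  obtain ⟨as, has, hr⟩ := exists_validHist_simReach hfg y hbs
  exact ⟨as, has, mem_compMachine_iff.2 ⟨_, hr, .halt hm⟩⟩

variable (Φ Θ x f g) in
/-- Reaching the configuration from the consumed answers `pre` alone is what identifies the
`g`-query that the machine asks after reading `pre`. -/
def SimFaithful (as : List ℕ) : SimCfg → Prop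
  | (bs, rem, inn) =>
    (∃ pre, as = pre ++ rem ∧ SimReach Φ Θ x ([], pre, none) (bs, [], inn)) ∧
      ValidHist Φ f x bs ∧
      ∀ q cs, inn = some (q, cs) → (false, q) ∈ Φ (x :: bs) ∧ ValidHist Θ g q cs

theorem SimFaithful.step (hfg : ∀ n m, m ∈ f n → HaltsTo Θ g n m) (hns : ¬ Stuck Φ f x)
    {y : ℕ} {as : List ℕ} (has : ValidHist (compMachine Φ Θ x) g y as) {c c' : SimCfg}
    (hc : SimFaithful Φ Θ x f g as c) (hstep : SimStep Φ Θ x c c') :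
    SimFaithful Φ Θ x f g as c' := by
  cases hstep with
  | outer_query hq =>
    obtain ⟨⟨pre, hpre, hr⟩, hbs, -⟩ := hc
    exact ⟨⟨pre, hpre, hr.tail (.outer_query hq)⟩, hbs, by rintro q cs ⟨⟩; exact ⟨hq, .nil⟩⟩
  | @inner_halt bs rem q cs m hm =>
    obtain ⟨⟨pre, hpre, hr⟩, hbs, hinn⟩ := hc
    obtain ⟨hq, hcs⟩ := hinn q cs rfl
    obtain ⟨m', hm'⟩ : ∃ m', m' ∈ f q :=
      Part.dom_iff_mem.1 (by_contra fun hq' => hns ⟨bs, q, hbs, hq, hq'⟩)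
    obtain rfl : m = m' := HaltsTo.unique ⟨cs, hcs, hm⟩ (hfg q m' hm')
    exact ⟨⟨pre, hpre, hr.tail (.inner_halt hm)⟩,
      validHist_append_singleton_iff.2 ⟨hbs, q, hq, hm'⟩, by rintro _ _ ⟨⟩⟩
  | @inner_query bs a rem q cs q' hq' =>
    obtain ⟨⟨pre, rfl, hr⟩, hbs, hinn⟩ := hc
    obtain ⟨hq, hcs⟩ := hinn q cs rfl
    -- `a` answers the query that the machine asks after reading `pre`, and that query is `q'`
    have hout : (false, q') ∈ compMachine Φ Θ x (y :: pre) :=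
      mem_compMachine_iff.2 ⟨_, hr, .query hq'⟩
    have has' : ValidHist (compMachine Φ Θ x) g y (pre ++ [a] ++ rem) := by simpa using has
    obtain ⟨-, q'', hq'', ha⟩ := validHist_append_singleton_iff.1 has'.of_append
    obtain rfl : q'' = q' := by simpa using Part.mem_unique hq'' hout
    refine ⟨⟨pre ++ [a], by simp, (hr.append_rem [a]).tail (.inner_query hq')⟩, hbs, ?_⟩
    rintro _ _ ⟨⟩
    exact ⟨hq, validHist_append_singleton_iff.2 ⟨hcs, q'', hq', ha⟩⟩

theorem simFaithful_of_simReach (hfg : ∀ n m, m ∈ f n → HaltsTo Θ g n m)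
    (hns : ¬ Stuck Φ f x) {y : ℕ} {as : List ℕ} (has : ValidHist (compMachine Φ Θ x) g y as)
    {c : SimCfg} (hc : SimReach Φ Θ x ([], as, none) c) : SimFaithful Φ Θ x f g as c := by
  induction hc with
  | refl => exact ⟨⟨[], rfl, .refl⟩, .nil, by rintro _ _ ⟨⟩⟩
  | tail _ hstep ih => exact ih.step hfg hns has hstep

theorem compMachine_not_stuck (hfg : ∀ n m, m ∈ f n → HaltsTo Θ g n m)
    (hns : ¬ Stuck Φ f x) (y : ℕ) : ¬ Stuck (compMachine Φ Θ x) g y := by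
  rintro ⟨as, q', has, hq', hq'g⟩
  obtain ⟨_, hr, hout⟩ := mem_compMachine_iff.1 hq'
  cases hout with
  | @query bs q cs _ hq' =>
    obtain ⟨-, hbs, hinn⟩ := simFaithful_of_simReach hfg hns has hr
    obtain ⟨hq, hcs⟩ := hinn q cs rfl
    obtain ⟨m, hm⟩ : ∃ m, m ∈ f q :=
      Part.dom_iff_mem.1 (by_contra fun h => hns ⟨bs, q, hbs, hq, h⟩)
    exact (hfg q m hm).not_stuck ⟨cs, q', hcs, hq', hq'g⟩

theorem haltsTo_of_compMachine (hfg : ∀ n m, m ∈ f n → HaltsTo Θ g n m)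
    (hns : ¬ Stuck Φ f x) {y m : ℕ} (h : HaltsTo (compMachine Φ Θ x) g y m) :
    HaltsTo Φ f x m := by
  obtain ⟨as, has, hm⟩ := h
  obtain ⟨_, hr, hout⟩ := mem_compMachine_iff.1 hm
  cases hout with
  | @halt bs _ _ hm => exact ⟨bs, (simFaithful_of_simReach hfg hns has hr).2.1, hm⟩

end Simulation

theorem simMove_primrec : Primrec₂ simMove := by
  let α := SimCfg × (Bool × ℕ)
  have hbs : Primrec fun p : α => p.1.1 := Primrec.fst.comp .fst
  have hrem : Primrec fun p : α => p.1.2.1 := Primrec.fst.comp (Primrec.snd.comp .fst)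
  have hb : Primrec fun p : α => p.2.1 := Primrec.fst.comp .snd
  have hn : Primrec fun p : α => p.2.2 := Primrec.snd.comp .snd
  have houter : Primrec fun p : α =>
      (bif p.2.1 then .inl p.2 else .inr (p.1.1, p.1.2.1, some (p.2.2, [])) :
        (Bool × ℕ) ⊕ SimCfg) :=
    Primrec.cond hb (Primrec.sumInl.comp .snd) (Primrec.sumInr.comp
      (hbs.pair (hrem.pair (Primrec.option_some.comp (hn.pair (Primrec.const []))))))
  have hconsume : Primrec fun y : (α × (ℕ × List ℕ)) × (ℕ × List ℕ) =>
      (.inr (y.1.1.1.1, y.2.2, some (y.1.2.1, y.1.2.2 ++ [y.2.1])) : (Bool × ℕ) ⊕ SimCfg) :=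
    Primrec.sumInr.comp ((hbs.comp (Primrec.fst.comp .fst)).pair ((Primrec.snd.comp .snd).pair
      (Primrec.option_some.comp ((Primrec.fst.comp (Primrec.snd.comp .fst)).pair
        (Primrec.list_concat.comp (Primrec.snd.comp (Primrec.snd.comp .fst))
          (Primrec.fst.comp .snd))))))
  have hinner : Primrec fun y : α × (ℕ × List ℕ) =>
      (bif y.1.2.1 then .inr (y.1.1.1 ++ [y.1.2.2], y.1.1.2.1, none) else
        List.casesOn y.1.1.2.1 (.inl y.1.2) fun a rem =>
          .inr (y.1.1.1, rem, some (y.2.1, y.2.2 ++ [a])) : (Bool × ℕ) ⊕ SimCfg) :=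
    Primrec.cond (hb.comp .fst)
      ((Primrec.sumInr.comp ((Primrec.list_concat.comp hbs hn).pair
        (hrem.pair (Primrec.const none)))).comp .fst)
      (Primrec.list_casesOn (hrem.comp .fst) (Primrec.sumInl.comp (Primrec.snd.comp .fst))
        hconsume.to₂)
  refine (Primrec.option_casesOn (Primrec.snd.comp (Primrec.snd.comp .fst)) houter
    hinner.to₂).to₂.of_eq ?_
  rintro ⟨bs, rem | ⟨a, rem⟩, _ | ⟨q, cs⟩⟩ ⟨_ | _, n⟩ <;> rfl

open Nat.Partrec (Code) in
theorem phi_partrec : Partrec₂ phi :=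
  ((Code.eval_part.comp ((Computable.ofNat Code).comp .fst) (Computable.encode.comp .snd)).bind
    (Computable.decode.comp .snd).ofOption.to₂).of_eq fun _ => rfl

open Nat.Partrec (Code) in
theorem exists_primrec₂_phi_eq {F : ℕ → ℕ → List ℕ →. Bool × ℕ}
    (hF : Partrec fun t : ℕ × ℕ × List ℕ => F t.1 t.2.1 t.2.2) :
    ∃ b : ℕ → ℕ → ℕ, Primrec₂ b ∧ ∀ d e, phi (b d e) = F d e := by
  obtain ⟨c, hc⟩ := Code.exists_code.1 hF
  refine ⟨fun d e => Encodable.encode ((c.curry d).curry e),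
    Primrec.encode.comp₂ (Code.primrec₂_curry.comp₂ (Code.primrec₂_curry.comp₂
      (Primrec₂.const c) .left) .right), fun d e => funext fun l => ?_⟩
  have hpair : Nat.pair d (Nat.pair e (Encodable.encode l)) = Encodable.encode (d, e, l) := rfl
  rw [phi, Denumerable.ofNat_encode, Code.eval_curry, Code.eval_curry, hpair, hc]
  simp only [Encodable.encodek, Part.coe_some, Part.bind_some, Part.bind_map,
    Part.bind_some_right]

theorem simTransition_phi_partrec :
    Partrec₂ fun (p : ℕ × ℕ) (c : SimCfg) => simTransition (phi p.2) (phi p.1) p.2 c := by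
  have hidx : Primrec₂ fun (p : ℕ × ℕ) (c : SimCfg) => c.2.2.elim p.2 fun _ => p.1 :=
    (Primrec.option_casesOn (Primrec.snd.comp (Primrec.snd.comp .snd)) (Primrec.snd.comp .fst)
      (Primrec.fst.comp (Primrec.fst.comp .fst)).to₂).to₂.of_eq fun _ c => by cases c.2.2 <;> rfl
  have hinput : Primrec₂ fun (p : ℕ × ℕ) (c : SimCfg) =>
      c.2.2.elim (p.2 :: c.1) fun qc => qc.1 :: qc.2 :=
    (Primrec.option_casesOn (Primrec.snd.comp (Primrec.snd.comp .snd))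
      (Primrec.list_cons.comp (Primrec.snd.comp .fst) (Primrec.fst.comp .snd))
      (Primrec.list_cons.comp (Primrec.fst.comp .snd) (Primrec.snd.comp .snd)).to₂).to₂.of_eq
      fun _ c => by cases c.2.2 <;> rfl
  refine ((phi_partrec.comp hidx.to_comp hinput.to_comp).map
    (simMove_primrec.to_comp.comp (Computable.snd.comp .fst) .snd).to₂).of_eq ?_
  rintro ⟨p, bs, rem, _ | ⟨q, cs⟩⟩ <;> rfl

theorem compMachine_phi_partrec :
    Partrec fun t : ℕ × ℕ × List ℕ => compMachine (phi t.2.1) (phi t.1) t.2.1 t.2.2 := by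
  have hfix : Partrec₂ fun p : ℕ × ℕ => PFun.fix (simTransition (phi p.2) (phi p.1) p.2) :=
    simTransition_phi_partrec.fix
  have hp : Computable fun t : ℕ × ℕ × List ℕ => (t.1, t.2.1) :=
    Computable.fst.pair (Computable.fst.comp .snd)
  have hc : Computable fun t : ℕ × ℕ × List ℕ => (([], t.2.2.tail, none) : SimCfg) :=
    (Computable.const []).pair
      ((Primrec.list_tail.to_comp.comp (Computable.snd.comp .snd)).pair (Computable.const none))
  exact (hfix.comp hp hc).of_eq fun _ => rfl

theorem subTuringLE_of_computable {f g : ℕ →. ℕ} {b : ℕ → ℕ} (hb : Computable b)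
    (hfg : ∀ n m, m ∈ f n → m ∈ g (b n)) : SubTuringLE f g := by
  let M : List ℕ → Bool × ℕ := fun l => l.tail.head?.elim (false, b l.headI) (true, ·)
  have hM : Computable M :=
    (Computable.option_casesOn (Primrec.list_head?.to_comp.comp Primrec.list_tail.to_comp)
      ((Computable.const false).pair (hb.comp Primrec.list_headI.to_comp))
      ((Computable.const true).pair .snd).to₂).of_eq fun l => by
        rcases l with _ | ⟨_, _ | _⟩ <;> rfl
  refine ⟨fun l => Part.some (M l), hM.partrec,
    fun n m hm => ⟨[m], fun k hk => ?_, Part.mem_some _⟩⟩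
  obtain rfl : k = 0 := by simpa using hk
  exact ⟨b n, Part.mem_some _, hfg n m hm⟩

theorem mem_KJump_of_phi_eq_compMachine {f g : ℕ →. ℕ} {Θ : List ℕ →. Bool × ℕ} {b e m : ℕ}
    (hfg : ∀ n m, m ∈ f n → HaltsTo Θ g n m) (hb : phi b = compMachine (phi e) Θ e)
    (hm : m ∈ KJump f e) : m ∈ KJump g b := by
  obtain ⟨hns, rfl⟩ := hm
  have halts_iff : (∃ m, HaltsTo (phi e) f e m) ↔ ∃ m, HaltsTo (phi b) g b m := by
    rw [hb]
    exact exists_congr fun m => ⟨fun h => h.compMachine hfg b, haltsTo_of_compMachine hfg hns⟩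
  have hns' : ¬ Stuck (phi b) g b := hb ▸ compMachine_not_stuck hfg hns b
  exact ⟨hns', if_congr halts_iff.symm rfl rfl⟩

theorem KJump_uniformly_monotone :
    ∃ b : ℕ → ℕ → ℕ, Computable₂ b ∧
      ∀ (f g : ℕ →. ℕ) (d : ℕ),
        (∀ n m, m ∈ f n → HaltsTo (phi d) g n m) →
        (∀ e m, m ∈ KJump f e → m ∈ KJump g (b d e)) ∧
        SubTuringLE (KJump f) (KJump g) := by
  obtain ⟨b, hb, hphi⟩ := exists_primrec₂_phi_eq
    (F := fun d e => compMachine (phi e) (phi d) e) compMachine_phi_partrec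
  refine ⟨b, hb.to_comp, fun f g d hfg => ?_⟩
  have hK : ∀ e m, m ∈ KJump f e → m ∈ KJump g (b d e) :=
    fun e m => mem_KJump_of_phi_eq_compMachine hfg (hphi d e)
  exact ⟨hK, subTuringLE_of_computable (hb.to_comp.comp (.const d) .id) hK⟩
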